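/- arXiv:2501.17100 — 3 statements merged into one kernel-verified Lean document; each statement's English description precedes it below -/
import Mathlib

section
/- Let a₁, a₂ ∈ [0,∞), b₂₁ ∈ (−∞,0], b₁₁, b₂₂, θ ∈ (0,∞), m, κ₁, κ₂ ∈ ℝ and y₁, y₂ ∈ [0,∞), x₀ ∈ ℝ. Then the function e₃ converges at infinity, namely e₃(t) → (1/θ)·( m − κ₁·a₁/b₁₁ − κ₂·( a₂/b₂₂ − b₂₁·a₁/(b₁₁·b₂₂) ) ) as t → ∞. (This is the subcritical-case behavior of E(X_t) in Proposition 3.1.) -/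
/-!
Each mean function has the form `x e^{-rt} + ∫₀ᵗ e^{-r(t-s)} h(s) ds` with `h` continuous
on `[0, ∞)` and convergent at infinity. After the substitution `u = t - s` the convolution
becomes `∫₀^∞ 1_{u ≤ t} e^{-ru} h(t - u) du`; since `h` is bounded on `[0, ∞)` and `e^{-ru}`
is integrable, dominated convergence sends it to `lim h / r`. Applying this to `e₁`, then
`e₂`, then `e₃` gives the limit.
-/

open MeasureTheory Filter Real Set Topology

noncomputable def expConv (r : ℝ) (f : ℝ → ℝ) (t : ℝ) : ℝ :=
  ∫ s in (0:ℝ)..t, exp (-r * (t - s)) * f s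

section

variable {r : ℝ} {f g : ℝ → ℝ}

theorem tendsto_exp_neg_mul_atTop (hr : 0 < r) : Tendsto (fun t => exp (-r * t)) atTop (𝓝 0) :=
  tendsto_exp_atBot.comp (tendsto_id.const_mul_atTop_of_neg (neg_lt_zero.2 hr))

theorem continuous_integral_exp_neg_mul (r : ℝ) :
    Continuous fun t => ∫ u in (0:ℝ)..t, exp (-r * u) :=
  intervalIntegral.continuous_primitive
    (fun _ _ => (by fun_prop : Continuous _).intervalIntegrable _ _) 0

theorem tendsto_integral_exp_neg_mul (hr : 0 < r) :
    Tendsto (fun t => ∫ u in (0:ℝ)..t, exp (-r * u)) atTop (𝓝 (1 / r)) := by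
  have h := intervalIntegral_tendsto_integral_Ioi 0 (exp_neg_integrableOn_Ioi 0 hr) tendsto_id
  rw [integral_exp_mul_Ioi (neg_lt_zero.2 hr), mul_zero, exp_zero, div_neg, neg_div, neg_neg] at h
  exact h

theorem expConv_congr (h : EqOn f g (Ici 0)) : EqOn (expConv r f) (expConv r g) (Ici 0) := by
  intro t ht
  refine intervalIntegral.integral_congr fun s hs => ?_
  rw [uIcc_of_le ht] at hs
  simp only [h hs.1]

theorem expConv_eq_exp_mul_integral (r : ℝ) (f : ℝ → ℝ) (t : ℝ) :
    expConv r f t = exp (-r * t) * ∫ s in (0:ℝ)..t, exp (r * s) * f s := by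
  rw [expConv, ← intervalIntegral.integral_const_mul]
  refine intervalIntegral.integral_congr fun s _ => ?_
  rw [← mul_assoc, ← exp_add]
  ring_nf

theorem continuous_expConv (hf : Continuous f) : Continuous (expConv r f) := by
  simp only [funext (expConv_eq_exp_mul_integral r f)]
  exact (by fun_prop : Continuous _).mul (intervalIntegral.continuous_primitive
    (fun _ _ => (by fun_prop : Continuous _).intervalIntegrable _ _) 0)

theorem continuousOn_expConv (hf : ContinuousOn f (Ici 0)) :
    ContinuousOn (expConv r f) (Ici 0) := by
  have hext : Continuous fun s => f (max s 0) :=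
    hf.comp_continuous (by fun_prop) fun s => le_max_right s 0
  refine (continuous_expConv hext).continuousOn.congr (expConv_congr fun s hs => ?_)
  rw [max_eq_left hs]

theorem expConv_eq_integral_Ioi (r : ℝ) (f : ℝ → ℝ) {t : ℝ} (ht : 0 ≤ t) :
    expConv r f t = ∫ u in Ioi 0, (Iic t).indicator (fun u => exp (-r * u) * f (t - u)) u := by
  rw [integral_indicator measurableSet_Iic, Measure.restrict_restrict measurableSet_Iic,
    Iic_inter_Ioi, ← intervalIntegral.integral_of_le ht, expConv]
  simpa using (intervalIntegral.integral_comp_sub_left (fun s => exp (-r * (t - s)) * f s) t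
    (a := 0) (b := t)).symm

theorem ContinuousOn.exists_bound_Ici_of_tendsto {E : Type*} [NormedAddCommGroup E] {f : ℝ → E}
    {a : ℝ} {L : E} (hf : ContinuousOn f (Ici a)) (hL : Tendsto f atTop (𝓝 L)) :
    ∃ C, ∀ s ∈ Ici a, ‖f s‖ ≤ C := by
  obtain ⟨T, hT⟩ :=
    eventually_atTop.1 (hL.norm.eventually (eventually_le_nhds (lt_add_one ‖L‖)))
  obtain ⟨C, hC⟩ := isCompact_Icc.exists_bound_of_continuousOn
    (hf.mono Icc_subset_Ici_self : ContinuousOn f (Icc a T))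
  refine ⟨max C (‖L‖ + 1), fun s hs => ?_⟩
  rcases le_total s T with hsT | hTs
  · exact (hC s ⟨hs, hsT⟩).trans (le_max_left _ _)
  · exact (hT s hTs).trans (le_max_right _ _)

theorem tendsto_expConv {L : ℝ} (hr : 0 < r) (hf : ContinuousOn f (Ici 0))
    (hL : Tendsto f atTop (𝓝 L)) : Tendsto (expConv r f) atTop (𝓝 (L / r)) := by
  obtain ⟨C, hC⟩ := hf.exists_bound_Ici_of_tendsto hL
  have hlim : ∫ u in Ioi 0, exp (-r * u) * L = L / r := by
    rw [integral_mul_const, integral_exp_mul_Ioi (neg_lt_zero.2 hr)]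
    field_simp
    simp
  rw [← hlim]
  refine Tendsto.congr' (eventuallyEq_of_mem (Ici_mem_atTop 0)
    fun t ht => (expConv_eq_integral_Ioi r f ht).symm) ?_
  refine tendsto_integral_filter_of_dominated_convergence (fun u => C * exp (-r * u)) ?_ ?_
    ((exp_neg_integrableOn_Ioi 0 hr).const_mul C) ?_
  · filter_upwards with t
    refine (aestronglyMeasurable_indicator_iff measurableSet_Iic).2 ?_
    have hcont : ContinuousOn (fun u => exp (-r * u) * f (t - u)) (Iic t) :=
      (continuous_exp.comp (by fun_prop)).continuousOn.mul
        (hf.comp (by fun_prop) fun u hu => mem_Ici.2 (sub_nonneg.2 hu))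
    exact (hcont.aestronglyMeasurable measurableSet_Iic).mono_measure
      (Measure.restrict_mono subset_rfl Measure.restrict_le_self)
  · filter_upwards [eventually_ge_atTop 0] with t ht
    filter_upwards [ae_restrict_mem measurableSet_Ioi] with u hu
    by_cases hut : u ∈ Iic t
    · rw [indicator_of_mem hut, norm_mul, norm_of_nonneg (exp_pos _).le, mul_comm]
      exact mul_le_mul_of_nonneg_right (hC _ (mem_Ici.2 (sub_nonneg.2 hut))) (exp_pos _).le
    · rw [indicator_of_notMem hut, norm_zero]
      exact mul_nonneg ((norm_nonneg _).trans (hC 0 self_mem_Ici)) (exp_pos _).le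
  · filter_upwards with u
    refine Tendsto.congr'
      (eventuallyEq_of_mem (Ici_mem_atTop u) fun t ht => (indicator_of_mem ht _).symm) ?_
    exact tendsto_const_nhds.mul (hL.comp (tendsto_atTop_add_const_right _ (-u) tendsto_id))

end

theorem doubleHeston_subcritical_mean_X_general
    (a1 a2 b21 b11 b22 θ m κ1 κ2 y1 y2 x0 : ℝ)
    (hb11 : 0 < b11) (hb22 : 0 < b22) (hθ : 0 < θ)
    (e1 e2 e3 : ℝ → ℝ)
    (he1 : ∀ t, 0 ≤ t →
      e1 t = y1 * Real.exp (-b11 * t) + a1 * ∫ u in (0:ℝ)..t, Real.exp (-b11 * u))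
    (he2 : ∀ t, 0 ≤ t →
      e2 t = y2 * Real.exp (-b22 * t) + a2 * (∫ u in (0:ℝ)..t, Real.exp (-b22 * u))
        - b21 * ∫ s in (0:ℝ)..t, Real.exp (-b22 * (t - s)) * e1 s)
    (he3 : ∀ t, 0 ≤ t →
      e3 t = x0 * Real.exp (-θ * t) + m * (∫ u in (0:ℝ)..t, Real.exp (-θ * u))
        - κ1 * (∫ s in (0:ℝ)..t, Real.exp (-θ * (t - s)) * e1 s)
        - κ2 * ∫ s in (0:ℝ)..t, Real.exp (-θ * (t - s)) * e2 s) :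
    Tendsto e3 atTop
      (nhds ((1 / θ) * (m - κ1 * a1 / b11 - κ2 * (a2 / b22 - b21 * a1 / (b11 * b22))))) := by
  have hc1 : ContinuousOn e1 (Ici 0) :=
    ((by fun_prop : Continuous fun t => y1 * exp (-b11 * t)).add
      ((continuous_integral_exp_neg_mul b11).const_mul a1)).continuousOn.congr
      fun t ht => he1 t ht
  have hl1 : Tendsto e1 atTop (𝓝 (a1 / b11)) := by
    convert (((tendsto_exp_neg_mul_atTop hb11).const_mul y1).add
      ((tendsto_integral_exp_neg_mul hb11).const_mul a1)).congr'
      (eventuallyEq_of_mem (Ici_mem_atTop 0) fun t ht => (he1 t ht).symm) using 2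
    ring
  have hc2 : ContinuousOn e2 (Ici 0) :=
    ((((by fun_prop : Continuous fun t => y2 * exp (-b22 * t)).add
      ((continuous_integral_exp_neg_mul b22).const_mul a2)).continuousOn).sub
      (continuousOn_const.mul (continuousOn_expConv hc1))).congr
      fun t ht => he2 t ht
  have hl2 : Tendsto e2 atTop (𝓝 (a2 / b22 - b21 * a1 / (b11 * b22))) := by
    convert (((tendsto_exp_neg_mul_atTop hb22).const_mul y2).add
      ((tendsto_integral_exp_neg_mul hb22).const_mul a2)).sub
      ((tendsto_expConv hb22 hc1 hl1).const_mul b21) |>.congr'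
      (eventuallyEq_of_mem (Ici_mem_atTop 0) fun t ht => (he2 t ht).symm) using 2
    ring
  convert (((tendsto_exp_neg_mul_atTop hθ).const_mul x0).add
      ((tendsto_integral_exp_neg_mul hθ).const_mul m)).sub
      ((tendsto_expConv hθ hc1 hl1).const_mul κ1) |>.sub
      ((tendsto_expConv hθ hc2 hl2).const_mul κ2) |>.congr'
      (eventuallyEq_of_mem (Ici_mem_atTop 0) fun t ht => (he3 t ht).symm) using 2
  ring

theorem doubleHeston_subcritical_mean_X
    (a1 a2 b21 b11 b22 θ m κ1 κ2 y1 y2 x0 : ℝ)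
    (ha1 : 0 ≤ a1) (ha2 : 0 ≤ a2) (hb21 : b21 ≤ 0)
    (hb11 : 0 < b11) (hb22 : 0 < b22) (hθ : 0 < θ)
    (hy1 : 0 ≤ y1) (hy2 : 0 ≤ y2)
    (e1 e2 e3 : ℝ → ℝ)
    (he1 : ∀ t, 0 ≤ t →
      e1 t = y1 * Real.exp (-b11 * t) + a1 * ∫ u in (0:ℝ)..t, Real.exp (-b11 * u))
    (he2 : ∀ t, 0 ≤ t →
      e2 t = y2 * Real.exp (-b22 * t) + a2 * (∫ u in (0:ℝ)..t, Real.exp (-b22 * u))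
        - b21 * ∫ s in (0:ℝ)..t, Real.exp (-b22 * (t - s)) * e1 s)
    (he3 : ∀ t, 0 ≤ t →
      e3 t = x0 * Real.exp (-θ * t) + m * (∫ u in (0:ℝ)..t, Real.exp (-θ * u))
        - κ1 * (∫ s in (0:ℝ)..t, Real.exp (-θ * (t - s)) * e1 s)
        - κ2 * ∫ s in (0:ℝ)..t, Real.exp (-θ * (t - s)) * e2 s) :
    Tendsto e3 atTop
      (nhds ((1 / θ) * (m - κ1 * a1 / b11 - κ2 * (a2 / b22 - b21 * a1 / (b11 * b22))))) :=
  doubleHeston_subcritical_mean_X_general a1 a2 b21 b11 b22 θ m κ1 κ2 y1 y2 x0 hb11 hb22 hθ e1 e2 e3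
    he1 he2 he3
end

section
/- Let a₁, a₂ ∈ [0,∞), b₂₁ ∈ (−∞,0], b₁₁ = 0, b₂₂ ∈ (0,∞) and y₁, y₂ ∈ [0,∞), so that e₁(t) = y₁ + a₁·t. Then e₂(t)/t → −b₂₁·a₁/b₂₂ as t → ∞, i.e., E(Y_t^{(2)}) has linear polynomial growth. (This is a critical case of Proposition 3.1.) -/
open MeasureTheory Filter Real

/-!
Since `e₁` is affine, both integrals in `e₂` have closed forms: `e₂(t)` is an affine function of
slope `-b₂₁ a₁ / b₂₂` plus a multiple of `exp (-b₂₂ t)`, which vanishes at infinity because `b₂₂ > 0`.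
Dividing by `t` leaves only the slope.
-/

lemma integral_exp_neg_mul {b : ℝ} (hb : b ≠ 0) (t : ℝ) :
    ∫ u in (0:ℝ)..t, exp (-b * u) = (1 - exp (-b * t)) / b := by
  rw [intervalIntegral.integral_comp_mul_left (fun u => exp u) (neg_ne_zero.mpr hb), integral_exp]
  simp only [mul_zero, exp_zero, smul_eq_mul]
  field_simp
  ring

lemma integral_exp_neg_mul_sub_mul_add_mul {b : ℝ} (hb : b ≠ 0) (y a t : ℝ) :
    ∫ s in (0:ℝ)..t, exp (-b * (t - s)) * (y + a * s)
      = (y + a * t) / b - a / b ^ 2 - exp (-b * t) * (y / b - a / b ^ 2) := by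
  have antideriv : ∀ s : ℝ, HasDerivAt
      (fun s => exp (-b * (t - s)) * ((y + a * s) / b - a / b ^ 2))
      (exp (-b * (t - s)) * (y + a * s)) s := by
    intro s
    have hexp : HasDerivAt (fun s : ℝ => exp (-b * (t - s))) (exp (-b * (t - s)) * b) s := by
      simpa using (((hasDerivAt_id s).const_sub t).const_mul (-b)).exp
    have haff : HasDerivAt (fun s : ℝ => (y + a * s) / b - a / b ^ 2) (a / b) s := by
      simpa using ((((hasDerivAt_id s).const_mul a).const_add y).div_const b).sub_const (a / b ^ 2)
    refine (hexp.mul haff).congr_deriv ?_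
    field_simp
    ring
  rw [intervalIntegral.integral_eq_sub_of_hasDerivAt (fun s _ => antideriv s)
    ((by fun_prop : Continuous fun s => exp (-b * (t - s)) * (y + a * s)).intervalIntegrable 0 t)]
  simp

lemma tendsto_mul_add_div_self_atTop {C L : ℝ} {g : ℝ → ℝ} (hg : Tendsto g atTop (nhds L)) :
    Tendsto (fun t => (C * t + g t) / t) atTop (nhds C) := by
  have hdiv : Tendsto (fun t => C + g t / t) atTop (nhds (C + 0)) :=
    tendsto_const_nhds.add (hg.div_atTop tendsto_id)
  rw [add_zero] at hdiv
  refine hdiv.congr' ?_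
  filter_upwards [eventually_ne_atTop 0] with t ht
  field_simp

theorem doubleHeston_critical_mean_Y2_general
    (a1 a2 b21 b22 y1 y2 : ℝ)
    (hb22 : 0 < b22)
    (e1 e2 : ℝ → ℝ)
    (he1 : ∀ t, 0 ≤ t → e1 t = y1 + a1 * t)
    (he2 : ∀ t, 0 ≤ t →
      e2 t = y2 * Real.exp (-b22 * t) + a2 * (∫ u in (0:ℝ)..t, Real.exp (-b22 * u))
        - b21 * ∫ s in (0:ℝ)..t, Real.exp (-b22 * (t - s)) * e1 s) :
    Tendsto (fun t => e2 t / t) atTop (nhds (-b21 * a1 / b22)) := by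
  set D := a2 / b22 - b21 * (y1 / b22 - a1 / b22 ^ 2)
  set E := y2 - a2 / b22 + b21 * (y1 / b22 - a1 / b22 ^ 2)
  have hb : b22 ≠ 0 := hb22.ne'
  have closed_form : ∀ t, 0 ≤ t → e2 t = -b21 * a1 / b22 * t + (D + E * exp (-b22 * t)) := by
    intro t ht
    have he1_on : ∫ s in (0:ℝ)..t, exp (-b22 * (t - s)) * e1 s
        = ∫ s in (0:ℝ)..t, exp (-b22 * (t - s)) * (y1 + a1 * s) :=
      intervalIntegral.integral_congr fun s hs => by
        rw [Set.uIcc_of_le ht] at hs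
        rw [he1 s hs.1]
    rw [he2 t ht, he1_on, integral_exp_neg_mul hb, integral_exp_neg_mul_sub_mul_add_mul hb]
    simp only [D, E]
    field_simp
    ring
  have hdecay : Tendsto (fun t => D + E * exp (-b22 * t)) atTop (nhds (D + E * 0)) :=
    tendsto_const_nhds.add <| tendsto_const_nhds.mul <|
      tendsto_exp_atBot.comp (tendsto_id.const_mul_atTop_of_neg (neg_neg_of_pos hb22))
  refine (tendsto_mul_add_div_self_atTop hdecay).congr' ?_
  filter_upwards [eventually_ge_atTop 0] with t ht
  rw [closed_form t ht]

theorem doubleHeston_critical_mean_Y2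
    (a1 a2 b21 b11 b22 y1 y2 : ℝ)
    (ha1 : 0 ≤ a1) (ha2 : 0 ≤ a2) (hb21 : b21 ≤ 0)
    (hb11 : b11 = 0) (hb22 : 0 < b22)
    (hy1 : 0 ≤ y1) (hy2 : 0 ≤ y2)
    (e1 e2 : ℝ → ℝ)
    (he1 : ∀ t, 0 ≤ t → e1 t = y1 + a1 * t)
    (he2 : ∀ t, 0 ≤ t →
      e2 t = y2 * Real.exp (-b22 * t) + a2 * (∫ u in (0:ℝ)..t, Real.exp (-b22 * u))
        - b21 * ∫ s in (0:ℝ)..t, Real.exp (-b22 * (t - s)) * e1 s) :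
    Tendsto (fun t => e2 t / t) atTop (nhds (-b21 * a1 / b22)) :=
  doubleHeston_critical_mean_Y2_general a1 a2 b21 b22 y1 y2 hb22 e1 e2 he1 he2
end

section
/- Let σ₁₂, σ₂₂, b₂₂, θ ∈ (0,∞), κ₂, u₃ ∈ ℝ, u₂ ∈ ℂ with Re u₂ ≤ 0, and u₄ ∈ (−∞,0]. Let K : [0,∞) → ℂ be differentiable with K(0) = u₂, Re K(t) ≤ 0 for all t ≥ 0, and K′(t) = (σ₁₂²/2)·K(t)² − b₂₂·K(t) − i·u₃·κ₂·e^{−θt} + u₄·σ₂₂²·e^{−2θt} for all t ≥ 0. Set C₂ := min(θ, b₂₂/2), C₃ := |u₂| + |κ₂·u₃|·K(b₂₂,θ), C₄ := (σ₁₂²/2)·C₃² − u₄·σ₂₂², and C₅ := −Re(u₂) + 2C₄/b₂₂, where K(b,θ) := 1/|b−θ| if b ≠ θ and K(b,θ) := 2/(e·b) if b = θ. Then |K(t)| ≤ √(C₅² + C₃²)·e^{−C₂ t} for all t ≥ 0. -/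
open MeasureTheory Filter Real Complex

/-- The constant `K(b,θ)` from Step 3 of the proof of Proposition 4.1:
`K(b,θ) = 1/|b−θ|` if `b ≠ θ` and `K(b,θ) = 2/(e·b)` if `b = θ`. -/
noncomputable def expKernelConst (b θ : ℝ) : ℝ :=
  if b = θ then 2 / (Real.exp 1 * b) else 1 / |b - θ|

/-!
Writing the equation for `K` in real and imaginary parts, `Im K` solves a linear equation with
coefficient `σ12² Re K - b22 ≤ -b22`, so a barrier argument bounds `|Im K|` by the solution of
`J' = -b22 J + |κ2 u3| e^{-θt}`, `J 0 = |Im u2|`, which decays like `C3 e^{-C2 t}`. Then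
`v = -Re K` satisfies `v' ≤ (σ12²/2) (Im K)² - u4 σ22² e^{-2θt} - b22 v ≤ C4 e^{-2 C2 t} - b22 v`,
for which `C5 e^{-C2 t}` is a supersolution because `C5 ≥ 2 C4 / b22` and `C2 ≤ b22 / 2`.
-/

theorem image_le_of_deriv_le_deriv_boundary_where_ge {f f' B B' : ℝ → ℝ} {a : ℝ}
    (hf : ∀ x ≥ a, HasDerivAt f (f' x) x) (hB : ∀ x ≥ a, HasDerivAt B (B' x) x)
    (ha : f a ≤ B a) (bound : ∀ x ≥ a, B x ≤ f x → f' x ≤ B' x) :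
    ∀ x ≥ a, f x ≤ B x := by
  intro x hx
  have hBε : ∀ ε y, y ≥ a → HasDerivAt (fun y => B y + ε * (y - a)) (B' y + ε) y := fun ε y hy =>
    ((hB y hy).add (((hasDerivAt_id' y).sub_const a).const_mul ε)).congr_deriv (by ring)
  -- A strictly steeper barrier `B + ε (· - a)` can only be touched where `f ≥ B`.
  have tilted : ∀ ε > 0, f x ≤ B x + ε * (x - a) := fun ε hε =>
    image_le_of_liminf_slope_right_lt_deriv_boundary' (f' := f') (B' := fun y => B' y + ε)
      (fun y hy => (hf y hy.1).continuousAt.continuousWithinAt)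
      (fun y hy _ hr => (hf y hy.1).hasDerivWithinAt.liminf_right_slope_le hr)
      (by simpa using ha)
      (fun y hy => (hBε ε y hy.1).continuousAt.continuousWithinAt)
      (fun y hy => (hBε ε y hy.1).hasDerivWithinAt)
      (fun y hy hc => by
        have := bound y hy.1 (by nlinarith [hy.1])
        linarith)
      ⟨hx, le_rfl⟩
  refine le_of_forall_pos_le_add fun δ hδ =>
    (tilted (δ / (x - a + 1)) (div_pos hδ (by linarith))).trans ?_
  have : δ / (x - a + 1) * (x - a) ≤ δ := by
    rw [div_mul_eq_mul_div, div_le_iff₀ (by linarith)]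
    nlinarith
  linarith

theorem hasDerivAt_exp_neg_mul (c t : ℝ) :
    HasDerivAt (fun s => Real.exp (-c * s)) (-c * Real.exp (-c * t)) t := by
  simpa [mul_comm] using ((hasDerivAt_id' t).const_mul (-c)).exp

/-- `∫₀ᵗ e^{-b(t-s)} e^{-θs} ds`, the solution of `J' = -b J + e^{-θt}`, `J 0 = 0`. -/
noncomputable def expConvolution (b θ t : ℝ) : ℝ :=
  if b = θ then t * Real.exp (-b * t) else (Real.exp (-θ * t) - Real.exp (-b * t)) / (b - θ)

@[simp]
theorem expConvolution_zero (b θ : ℝ) : expConvolution b θ 0 = 0 := by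
  unfold expConvolution; split_ifs <;> simp

theorem hasDerivAt_expConvolution (b θ t : ℝ) :
    HasDerivAt (expConvolution b θ) (-b * expConvolution b θ t + Real.exp (-θ * t)) t := by
  unfold expConvolution
  split_ifs with hbθ
  · subst hbθ
    exact ((hasDerivAt_id' t).mul (hasDerivAt_exp_neg_mul b t)).congr_deriv (by ring)
  · refine (((hasDerivAt_exp_neg_mul θ t).sub
      (hasDerivAt_exp_neg_mul b t)).div_const _).congr_deriv ?_
    field_simp [sub_ne_zero.mpr hbθ]
    ring

theorem expConvolution_nonneg (b θ : ℝ) {t : ℝ} (ht : 0 ≤ t) : 0 ≤ expConvolution b θ t := by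
  unfold expConvolution
  split_ifs with hbθ
  · positivity
  rcases lt_or_gt_of_ne hbθ with h | h
  · exact div_nonneg_of_nonpos (sub_nonpos.mpr (exp_le_exp.mpr (by nlinarith))) (by linarith)
  · exact div_nonneg (sub_nonneg.mpr (exp_le_exp.mpr (by nlinarith))) (by linarith)

theorem expConvolution_le {b : ℝ} (hb : 0 < b) (θ : ℝ) {t : ℝ} (ht : 0 ≤ t) :
    expConvolution b θ t ≤ expKernelConst b θ * Real.exp (-min θ (b / 2) * t) := by
  unfold expConvolution expKernelConst
  split_ifs with hbθ
  · subst hbθ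
    rw [min_eq_right (by linarith)]
    -- `t e^{-bt} = (2/b) (bt/2) e^{-bt/2} · e^{-bt/2}` and `x e^{-x} ≤ e^{-1}`.
    have hx := mul_exp_neg_le_exp_neg_one (b / 2 * t)
    calc t * Real.exp (-b * t)
        = 2 / b * (b / 2 * t * Real.exp (-(b / 2 * t))) * Real.exp (-(b / 2) * t) := by
          rw [show -b * t = -(b / 2 * t) + -(b / 2) * t by ring, Real.exp_add]
          field_simp
      _ ≤ 2 / b * Real.exp (-1) * Real.exp (-(b / 2) * t) := by gcongr
      _ = 2 / (Real.exp 1 * b) * Real.exp (-(b / 2) * t) := by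
          rw [Real.exp_neg]; field_simp
  · have hθ : Real.exp (-θ * t) ≤ Real.exp (-min θ (b / 2) * t) :=
      exp_le_exp.mpr (by nlinarith [min_le_left θ (b / 2)])
    have hb' : Real.exp (-b * t) ≤ Real.exp (-min θ (b / 2) * t) :=
      exp_le_exp.mpr (by nlinarith [min_le_right θ (b / 2)])
    have hdiff : |Real.exp (-θ * t) - Real.exp (-b * t)| ≤ Real.exp (-min θ (b / 2) * t) :=
      abs_sub_le_iff.mpr ⟨by linarith [exp_pos (-b * t)], by linarith [exp_pos (-θ * t)]⟩
    calc (Real.exp (-θ * t) - Real.exp (-b * t)) / (b - θ)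
        ≤ |Real.exp (-θ * t) - Real.exp (-b * t)| / |b - θ| := by
          rw [← abs_div]; exact le_abs_self _
      _ ≤ Real.exp (-min θ (b / 2) * t) / |b - θ| := by gcongr
      _ = 1 / |b - θ| * Real.exp (-min θ (b / 2) * t) := by ring

/-- The right-hand side of the equation for `K̃⁽²⁾` in (EDK). -/
noncomputable def riccatiField (σ12 σ22 b22 θ κ2 u3 u4 t : ℝ) (k : ℂ) : ℂ :=
  (σ12 ^ 2 / 2 : ℂ) * k ^ 2 - (b22 : ℂ) * k
    - Complex.I * (u3 : ℂ) * (κ2 : ℂ) * (Real.exp (-θ * t) : ℂ)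
    + (u4 : ℂ) * (σ22 ^ 2 : ℂ) * (Real.exp (-2 * θ * t) : ℂ)

section Riccati

variable {σ12 σ22 b22 θ κ2 u3 u4 : ℝ} {K : ℝ → ℂ}

theorem riccatiField_re (t : ℝ) (k : ℂ) :
    (riccatiField σ12 σ22 b22 θ κ2 u3 u4 t k).re =
      σ12 ^ 2 / 2 * (k.re ^ 2 - k.im ^ 2) - b22 * k.re + u4 * σ22 ^ 2 * Real.exp (-2 * θ * t) := by
  simp [riccatiField, pow_two, -Complex.ofReal_exp]

theorem riccatiField_im (t : ℝ) (k : ℂ) :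
    (riccatiField σ12 σ22 b22 θ κ2 u3 u4 t k).im =
      σ12 ^ 2 * k.re * k.im - b22 * k.im - u3 * κ2 * Real.exp (-θ * t) := by
  simp [riccatiField, pow_two, -Complex.ofReal_exp]
  ring

theorem abs_im_le_of_hasDerivAt_riccatiField (hb : 0 ≤ b22)
    (hK : ∀ t ≥ 0, HasDerivAt K (riccatiField σ12 σ22 b22 θ κ2 u3 u4 t (K t)) t)
    (hKre : ∀ t ≥ 0, (K t).re ≤ 0) :
    ∀ t ≥ 0, |(K t).im| ≤
      |κ2 * u3| * expConvolution b22 θ t + |(K 0).im| * Real.exp (-b22 * t) := by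
  set B := fun t => |κ2 * u3| * expConvolution b22 θ t + |(K 0).im| * Real.exp (-b22 * t)
  have hB : ∀ t, HasDerivAt B (-b22 * B t + |κ2 * u3| * Real.exp (-θ * t)) t := fun t =>
    (((hasDerivAt_expConvolution b22 θ t).const_mul _).add
      ((hasDerivAt_exp_neg_mul b22 t).const_mul _)).congr_deriv (by ring)
  have hB_nonneg : ∀ t ≥ 0, 0 ≤ B t := fun t ht => by
    have := expConvolution_nonneg b22 θ ht
    positivity
  -- The damping term `σ12² Re K · Im K` pushes `Im K` towards `0`, so it can be dropped.
  have signed : ∀ s : ℝ, |s| = 1 → ∀ t ≥ 0, s * (K t).im ≤ B t := by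
    intro s hs
    refine image_le_of_deriv_le_deriv_boundary_where_ge
      (fun t ht => ((Complex.imCLM.hasFDerivAt.comp_hasDerivAt t (hK t ht)).const_mul s))
      (fun t _ => hB t) ?_ ?_
    · simpa [B, hs] using le_abs_self (s * (K 0).im)
    · intro t ht hc
      have hsim : 0 ≤ s * (K t).im := (hB_nonneg t ht).trans hc
      have hdamp : σ12 ^ 2 * (K t).re * (s * (K t).im) ≤ 0 :=
        mul_nonpos_of_nonpos_of_nonneg
          (mul_nonpos_of_nonneg_of_nonpos (sq_nonneg _) (hKre t ht)) hsim
      have hforce : -(s * (u3 * κ2)) ≤ |κ2 * u3| := by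
        simpa [abs_mul, hs, mul_comm] using neg_le_abs (s * (u3 * κ2))
      have hE := (Real.exp_pos (-θ * t)).le
      simp only [Complex.imCLM_apply, riccatiField_im]
      nlinarith
  intro t ht
  exact abs_le.mpr ⟨by linarith [signed (-1) (by simp) t ht], by linarith [signed 1 (by simp) t ht]⟩

theorem neg_re_le_of_hasDerivAt_riccatiField (hb : 0 < b22) (hu4 : u4 ≤ 0)
    (hK : ∀ t ≥ 0, HasDerivAt K (riccatiField σ12 σ22 b22 θ κ2 u3 u4 t (K t)) t)
    (hKre : ∀ t ≥ 0, (K t).re ≤ 0)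
    {C2 C3 C4 C5 : ℝ} (hC2 : 0 ≤ C2) (hC2θ : C2 ≤ θ) (hC2b : C2 ≤ b22 / 2)
    (him : ∀ t ≥ 0, |(K t).im| ≤ C3 * Real.exp (-C2 * t))
    (hC4 : C4 = σ12 ^ 2 / 2 * C3 ^ 2 - u4 * σ22 ^ 2) (hC5 : -(K 0).re + 2 * C4 / b22 ≤ C5) :
    ∀ t ≥ 0, -(K t).re ≤ C5 * Real.exp (-C2 * t) := by
  have hC4_nonneg : 0 ≤ C4 := hC4 ▸ by nlinarith [sq_nonneg σ12, sq_nonneg C3, sq_nonneg σ22]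
  have hC4C5 : 2 * C4 / b22 ≤ C5 := by linarith [hKre 0 le_rfl]
  have hC4_le : C4 ≤ (b22 - C2) * C5 := by
    have : b22 / 2 * (2 * C4 / b22) = C4 := by field_simp
    nlinarith [mul_le_mul_of_nonneg_left hC4C5 (by linarith : 0 ≤ b22 - C2)]
  have h0 : -(K 0).re ≤ C5 := by linarith [div_nonneg (mul_nonneg two_pos.le hC4_nonneg) hb.le]
  refine image_le_of_deriv_le_deriv_boundary_where_ge
    (fun t ht => (Complex.reCLM.hasFDerivAt.comp_hasDerivAt t (hK t ht)).neg)
    (fun t _ => (hasDerivAt_exp_neg_mul C2 t).const_mul C5) (by simpa using h0) ?_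
  intro t ht hc
  set E := Real.exp (-C2 * t)
  have hE : 0 < E := Real.exp_pos _
  have hE1 : E ≤ 1 := Real.exp_le_one_iff.mpr (by nlinarith)
  have hEθ : Real.exp (-2 * θ * t) ≤ E ^ 2 := by
    rw [← Real.exp_nat_mul]; exact exp_le_exp.mpr (by push_cast; nlinarith)
  have him2 : (K t).im ^ 2 ≤ (C3 * E) ^ 2 := by
    rw [← sq_abs]; exact pow_le_pow_left₀ (abs_nonneg _) (him t ht) 2
  -- On the barrier `-Re K ≥ C5 E`, so `(-Re K)' ≤ C4 E² - b22 C5 E ≤ -C2 C5 E`.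
  have hquad : σ12 ^ 2 / 2 * ((K t).im ^ 2 - (K t).re ^ 2) - u4 * σ22 ^ 2 * Real.exp (-2 * θ * t)
      ≤ C4 * E ^ 2 := by
    rw [hC4]
    have := mul_le_mul_of_nonneg_left him2 (by positivity : 0 ≤ σ12 ^ 2 / 2)
    have := mul_le_mul_of_nonneg_left hEθ (by nlinarith [sq_nonneg σ22] : 0 ≤ -u4 * σ22 ^ 2)
    nlinarith [sq_nonneg σ12, sq_nonneg (K t).re]
  have hC4E : C4 * E ^ 2 ≤ (b22 - C2) * C5 * E := by
    nlinarith [mul_le_mul_of_nonneg_left hE1 hC4_nonneg]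
  simp only [Complex.reCLM_apply, riccatiField_re]
  nlinarith

end Riccati

theorem Complex.norm_le_sqrt_of_abs_re_le_of_abs_im_le {z : ℂ} {a b : ℝ}
    (hre : |z.re| ≤ a) (him : |z.im| ≤ b) : ‖z‖ ≤ √(a ^ 2 + b ^ 2) := by
  rw [Complex.norm_eq_sqrt_sq_add_sq, ← sq_abs z.re, ← sq_abs z.im]
  gcongr

theorem riccati_second_component_decay_general
    (σ12 σ22 b22 θ : ℝ)
    (hb22 : 0 < b22) (hθ : 0 < θ)
    (κ2 u3 : ℝ) (u2 : ℂ) (u4 : ℝ) (hu4 : u4 ≤ 0)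
    (K : ℝ → ℂ)
    (hK0 : K 0 = u2)
    (hKre : ∀ t, 0 ≤ t → (K t).re ≤ 0)
    (hK : ∀ t, 0 ≤ t → HasDerivAt K
      ((σ12 ^ 2 / 2 : ℂ) * K t ^ 2 - (b22 : ℂ) * K t
        - Complex.I * (u3 : ℂ) * (κ2 : ℂ) * (Real.exp (-θ * t) : ℂ)
        + (u4 : ℂ) * (σ22 ^ 2 : ℂ) * (Real.exp (-2 * θ * t) : ℂ)) t)
    (C2 C3 C4 C5 : ℝ)
    (hC2 : C2 = min θ (b22 / 2))
    (hC3 : C3 = ‖u2‖ + |κ2 * u3| * expKernelConst b22 θ)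
    (hC4 : C4 = σ12 ^ 2 / 2 * C3 ^ 2 - u4 * σ22 ^ 2)
    (hC5 : C5 = -u2.re + 2 * C4 / b22) :
    ∀ t, 0 ≤ t →
      ‖K t‖ ≤ Real.sqrt (C5 ^ 2 + C3 ^ 2) * Real.exp (-C2 * t) := by
  have hK' : ∀ t ≥ 0, HasDerivAt K (riccatiField σ12 σ22 b22 θ κ2 u3 u4 t (K t)) t := hK
  have hC2θ : C2 ≤ θ := hC2 ▸ min_le_left _ _
  have hC2b : C2 ≤ b22 / 2 := hC2 ▸ min_le_right _ _
  have hC2_nonneg : 0 ≤ C2 := hC2 ▸ le_min hθ.le (by linarith)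
  have him : ∀ t ≥ 0, |(K t).im| ≤ C3 * Real.exp (-C2 * t) := fun t ht => by
    have hJ := expConvolution_le hb22 θ ht
    have hexp : Real.exp (-b22 * t) ≤ Real.exp (-C2 * t) := exp_le_exp.mpr (by nlinarith)
    have hu2im : |u2.im| ≤ ‖u2‖ := Complex.abs_im_le_norm u2
    calc |(K t).im| ≤ |κ2 * u3| * expConvolution b22 θ t + |u2.im| * Real.exp (-b22 * t) :=
          hK0 ▸ abs_im_le_of_hasDerivAt_riccatiField hb22.le hK' hKre t ht
      _ ≤ |κ2 * u3| * (expKernelConst b22 θ * Real.exp (-C2 * t))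
            + ‖u2‖ * Real.exp (-C2 * t) := by
          rw [← hC2] at hJ; gcongr
      _ = C3 * Real.exp (-C2 * t) := by rw [hC3]; ring
  have hre := neg_re_le_of_hasDerivAt_riccatiField (C5 := C5) hb22 hu4 hK' hKre
    hC2_nonneg hC2θ hC2b him hC4 (by rw [hK0, hC5])
  intro t ht
  calc ‖K t‖ ≤ √((C5 * Real.exp (-C2 * t)) ^ 2 + (C3 * Real.exp (-C2 * t)) ^ 2) :=
        Complex.norm_le_sqrt_of_abs_re_le_of_abs_im_le
          (by rw [abs_of_nonpos (hKre t ht)]; exact hre t ht) (him t ht)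
    _ = √(C5 ^ 2 + C3 ^ 2) * Real.exp (-C2 * t) := by
        rw [mul_pow, mul_pow, ← add_mul, Real.sqrt_mul (by positivity),
          Real.sqrt_sq (Real.exp_pos _).le]

theorem riccati_second_component_decay
    (σ12 σ22 b22 θ : ℝ)
    (hσ12 : 0 < σ12) (hσ22 : 0 < σ22) (hb22 : 0 < b22) (hθ : 0 < θ)
    (κ2 u3 : ℝ) (u2 : ℂ) (hu2 : u2.re ≤ 0) (u4 : ℝ) (hu4 : u4 ≤ 0)
    (K : ℝ → ℂ)
    (hK0 : K 0 = u2)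
    (hKre : ∀ t, 0 ≤ t → (K t).re ≤ 0)
    (hK : ∀ t, 0 ≤ t → HasDerivAt K
      ((σ12 ^ 2 / 2 : ℂ) * K t ^ 2 - (b22 : ℂ) * K t
        - Complex.I * (u3 : ℂ) * (κ2 : ℂ) * (Real.exp (-θ * t) : ℂ)
        + (u4 : ℂ) * (σ22 ^ 2 : ℂ) * (Real.exp (-2 * θ * t) : ℂ)) t)
    (C2 C3 C4 C5 : ℝ)
    (hC2 : C2 = min θ (b22 / 2))
    (hC3 : C3 = ‖u2‖ + |κ2 * u3| * expKernelConst b22 θ)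
    (hC4 : C4 = σ12 ^ 2 / 2 * C3 ^ 2 - u4 * σ22 ^ 2)
    (hC5 : C5 = -u2.re + 2 * C4 / b22) :
    ∀ t, 0 ≤ t →
      ‖K t‖ ≤ Real.sqrt (C5 ^ 2 + C3 ^ 2) * Real.exp (-C2 * t) :=
  riccati_second_component_decay_general σ12 σ22 b22 θ hb22 hθ κ2 u3 u2 u4 hu4 K hK0 hKre hK C2 C3
    C4 C5 hC2 hC3 hC4 hC5
end
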